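/- Let I : (0,∞) → (0,∞) be twice differentiable with I'(V) ≥ 0 for all V, and let χ < 0 be a real constant. Suppose I''(V) ≤ 2πχ/I(V)² + 3/I(V) − 3·I'(V)²/(4·I(V)) for all V. Then the Hawking mass m(V) = √(I(V))·(2πχ + I(V) − (1/4)·I'(V)²·I(V)) is monotone non-decreasing. -/

import Mathlib

/-!
Writing `g = c + I - I'² I / 4` (with `c = 2πχ`), the product and chain rules give
`m' = I' (c + 3 I - (3/4) I I'² - I² I'') / (2 √I)`. The hypothesis on `I''`, multiplied by `I²`,
says exactly that the bracket is nonnegative, and `I' ≥ 0` finishes.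
-/

open Real

noncomputable def hawkingMass (c : ℝ) (I I' : ℝ → ℝ) (V : ℝ) : ℝ :=
  √(I V) * (c + I V - (1/4) * (I' V)^2 * I V)

lemma hasDerivAt_hawkingMass {c : ℝ} {I I' : ℝ → ℝ} {V i'' : ℝ}
    (hI : HasDerivAt I (I' V) V) (hI' : HasDerivAt I' i'' V) (hpos : 0 < I V) :
    HasDerivAt (hawkingMass c I I')
      (I' V * (c + 3 * I V - (3/4) * I V * (I' V)^2 - (I V)^2 * i'') / (2 * √(I V))) V := by
  have hg : HasDerivAt (fun x => c + I x - (1/4) * (I' x)^2 * I x)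
      (I' V - ((1/4) * (2 * I' V * i'') * I V + (1/4) * (I' V)^2 * I' V)) V := by
    have hsq : HasDerivAt (fun x => (I' x)^2) (2 * I' V * i'') V := by
      simpa using hI'.fun_pow 2
    exact (hI.const_add c).sub ((hsq.const_mul (1/4)).mul hI)
  refine ((hI.sqrt hpos.ne').fun_mul hg).congr_deriv ?_
  have hs : √(I V) ≠ 0 := (sqrt_pos.mpr hpos).ne'
  have hsq : √(I V) ^ 2 = I V := sq_sqrt hpos.le
  field_simp
  linear_combination I' V * (8 - 4 * I V * i'' - 2 * I' V ^ 2) * hsq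

lemma sq_mul_le_of_le_hawking_bound {c a b e : ℝ} (ha : 0 < a)
    (h : e ≤ c / a^2 + 3 / a - 3 * b^2 / (4 * a)) :
    a^2 * e ≤ c + 3 * a - (3/4) * a * b^2 := by
  calc a^2 * e ≤ a^2 * (c / a^2 + 3 / a - 3 * b^2 / (4 * a)) := by gcongr
    _ = c + 3 * a - (3/4) * a * b^2 := by field_simp

theorem hawking_mass_monotone_general (I I' I'' : ℝ → ℝ) (χ : ℝ)
    (hI : ∀ V, 0 < V → HasDerivAt I (I' V) V)
    (hI' : ∀ V, 0 < V → HasDerivAt I' (I'' V) V)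
    (hpos : ∀ V, 0 < V → 0 < I V)
    (hmono : ∀ V, 0 < V → 0 ≤ I' V)
    (hsecond : ∀ V, 0 < V →
      I'' V ≤ 2*π*χ / (I V)^2 + 3 / I V - 3 * (I' V)^2 / (4 * I V)) :
    MonotoneOn (fun V => Real.sqrt (I V) * (2*π*χ + I V - (1/4) * (I' V)^2 * I V))
      (Set.Ioi (0:ℝ)) := by
  change MonotoneOn (hawkingMass (2*π*χ) I I') _
  have hderiv : ∀ V ∈ Set.Ioi (0:ℝ), HasDerivAt (hawkingMass (2*π*χ) I I')
      (I' V * (2*π*χ + 3 * I V - (3/4) * I V * (I' V)^2 - (I V)^2 * I'' V) / (2 * √(I V))) V :=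
    fun V hV => hasDerivAt_hawkingMass (hI V hV) (hI' V hV) (hpos V hV)
  refine monotoneOn_of_hasDerivWithinAt_nonneg (convex_Ioi 0)
    (fun V hV => (hderiv V hV).continuousAt.continuousWithinAt)
    (fun V hV => (hderiv V (by rwa [interior_Ioi] at hV)).hasDerivWithinAt) ?_
  rw [interior_Ioi]
  intro V hV
  have hbracket := sub_nonneg.2 (sq_mul_le_of_le_hawking_bound (hpos V hV) (hsecond V hV))
  have hI'_nonneg := hmono V hV
  positivity

theorem hawking_mass_monotone (I I' I'' : ℝ → ℝ) (χ : ℝ) (hχ : χ < 0)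
    (hI : ∀ V, 0 < V → HasDerivAt I (I' V) V)
    (hI' : ∀ V, 0 < V → HasDerivAt I' (I'' V) V)
    (hpos : ∀ V, 0 < V → 0 < I V)
    (hmono : ∀ V, 0 < V → 0 ≤ I' V)
    (hsecond : ∀ V, 0 < V →
      I'' V ≤ 2*π*χ / (I V)^2 + 3 / I V - 3 * (I' V)^2 / (4 * I V)) :
    MonotoneOn (fun V => Real.sqrt (I V) * (2*π*χ + I V - (1/4) * (I' V)^2 * I V))
      (Set.Ioi (0:ℝ)) :=
  hawking_mass_monotone_general I I' I'' χ hI hI' hpos hmono hsecond
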